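/- For every integer k ≥ 1 there exists a constant c = c(k) > 0 such that for all positive integers n, the number of 3-uniform hypergraphs with vertex set [n] containing no loose path of length k is at most 2^{c·n²}. -/

import Mathlib

open scoped Classical

/-- A hypergraph `H` contains a loose path of length `k`: distinct edges
`e 0, …, e (k-1)` in `H` such that `|e i ∩ e j| = 1` when `j = i + 1` and
`e i ∩ e j = ∅` for all other pairs `i ≠ j`. -/
def HasLoosePath (k : ℕ) (H : Finset (Finset ℕ)) : Prop :=
  ∃ e : Fin k → Finset ℕ, Function.Injective e ∧
    (∀ i, e i ∈ H) ∧
    (∀ i j : Fin k, (i : ℕ) + 1 = (j : ℕ) → (e i ∩ e j).card = 1) ∧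
    (∀ i j : Fin k, (i : ℕ) + 1 < (j : ℕ) → e i ∩ e j = ∅)

namespace LPC

/-- ℕ-indexed loose path of length `m` in `H`. -/
def LPn (m : ℕ) (e : ℕ → Finset ℕ) (H : Finset (Finset ℕ)) : Prop :=
  (∀ i, i < m → e i ∈ H) ∧
  (∀ i, i + 1 < m → ((e i) ∩ (e (i + 1))).card = 1) ∧
  (∀ i j, i + 1 < j → j < m → e i ∩ e j = ∅) ∧
  (∀ i j, i < j → j < m → e i ≠ e j)

lemma hasLoosePath_of_LPn {k : ℕ} {e : ℕ → Finset ℕ} {H : Finset (Finset ℕ)}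
    (h : LPn k e H) : HasLoosePath k H := by
  obtain ⟨h1, h2, h3, h4⟩ := h
  refine ⟨fun i => e i, ?_, fun i => h1 i i.2, ?_, ?_⟩
  · intro i j hij
    by_contra hne
    rcases lt_or_gt_of_ne (fun h : (i:ℕ) = (j:ℕ) => hne (Fin.ext h)) with h | h
    · exact h4 i j h j.2 hij
    · exact h4 j i h i.2 hij.symm
  · intro i j hij
    have hj : (j : ℕ) = (i : ℕ) + 1 := hij.symm
    show ((e (i:ℕ)) ∩ (e (j:ℕ))).card = 1
    rw [hj]
    exact h2 i (by omega)
  · intro i j hij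
    exact h3 i j hij j.2

lemma hasLoosePath_mono {k : ℕ} {H H' : Finset (Finset ℕ)} (hsub : H ⊆ H') :
    HasLoosePath k H → HasLoosePath k H' := by
  rintro ⟨e, h1, h2, h3, h4⟩
  exact ⟨e, h1, fun i => hsub (h2 i), h3, h4⟩

/-- Extending a loose path by one edge. -/
lemma LPn_extend {m : ℕ} (hm : 1 ≤ m) {e : ℕ → Finset ℕ} {g : Finset ℕ}
    {H : Finset (Finset ℕ)} {u : ℕ}
    (hH3 : ∀ f ∈ H, f.card = 3)
    (hp : LPn m e H) (hgH : g ∈ H)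
    (hu : u ∈ e (m - 1))
    (hdisj : ∀ i, i < m - 1 → g ∩ e i = ∅)
    (hlast : g ∩ e (m - 1) = {u}) :
    LPn (m + 1) (fun x => if x = m then g else e x) H := by
  obtain ⟨h1, h2, h3, h4⟩ := hp
  have hgcard : g.card = 3 := hH3 g hgH
  refine ⟨?_, ?_, ?_, ?_⟩
  · intro i hi
    by_cases h : i = m
    · simpa [h] using hgH
    · have hi' : i < m := by omega
      simpa [h] using h1 i hi'
  · intro i hi
    have him : i ≠ m := by omega
    by_cases h : i + 1 = m
    · have hieq : i = m - 1 := by omega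
      simp only [if_neg him, if_pos h]
      rw [hieq, Finset.inter_comm, hlast]
      simp
    · have hlt : i + 1 < m := by omega
      simp only [if_neg him, if_neg h]
      exact h2 i hlt
  · intro i j hij hj
    have him : i ≠ m := by omega
    by_cases h : j = m
    · simp only [if_neg him, if_pos h]
      rw [Finset.inter_comm]
      exact hdisj i (by omega)
    · simp only [if_neg him, if_neg h]
      exact h3 i j hij (by omega)
  · intro i j hij hj
    have him : i ≠ m := by omega
    by_cases h : j = m
    · simp only [if_neg him, if_pos h]
      intro heq
      by_cases hi2 : i < m - 1
      · have h0 := hdisj i hi2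
        rw [heq, Finset.inter_self] at h0
        rw [h0] at hgcard
        simp at hgcard
      · have hieq : i = m - 1 := by omega
        rw [hieq] at heq
        have h0 := hlast
        rw [heq, Finset.inter_self] at h0
        rw [h0] at hgcard
        simp at hgcard
    · simp only [if_neg him, if_neg h]
      exact h4 i j hij (by omega)

/-- Greedy construction: min degree > d, codegree ≤ t', gives a loose path. -/
lemma hasLoosePath_of_minDeg {k t' d : ℕ} (hk : 1 ≤ k) (hd : 3 * k * t' < d)
    {H : Finset (Finset ℕ)}
    (hH3 : ∀ f ∈ H, f.card = 3)
    (hne : H.Nonempty)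
    (hdeg : ∀ u f, f ∈ H → u ∈ f → d < (H.filter (fun e => u ∈ e)).card)
    (hco : ∀ a b : ℕ, a ≠ b → (H.filter (fun e => a ∈ e ∧ b ∈ e)).card ≤ t') :
    HasLoosePath k H := by
  have main : ∀ j, 1 ≤ j → j ≤ k → ∃ e, LPn j e H := by
    intro j
    induction j with
    | zero => intro h; omega
    | succ j ih =>
      intro _ hjk
      by_cases hj0 : j = 0
      · obtain ⟨f, hf⟩ := hne
        subst hj0
        refine ⟨fun _ => f, fun i hi => hf, ?_, ?_, ?_⟩
        · intro i hi; omega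
        · intro i j hij hj; omega
        · intro i j hij hj; omega
      · have hj1 : 1 ≤ j := by omega
        obtain ⟨e, hp⟩ := ih hj1 (by omega)
        obtain ⟨h1', h2', h3', h4'⟩ := hp
        -- find the free end vertex u
        have hufree : ∃ u, u ∈ e (j - 1) ∧ ∀ i, i < j - 1 → u ∉ e i := by
          by_cases hj2 : j = 1
          · have hcard : (e 0).card = 3 := hH3 _ (h1' 0 (by omega))
            have hne0 : (e 0).Nonempty := by
              rw [← Finset.card_pos, hcard]; omega
            obtain ⟨u, hu⟩ := hne0
            exact ⟨u, by simpa [hj2] using hu, fun i hi => by omega⟩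
          · have hjj : 2 ≤ j := by omega
            have hcard : (e (j - 1)).card = 3 := hH3 _ (h1' _ (by omega))
            have hint : ((e (j - 2)) ∩ (e (j - 1))).card = 1 := by
              have := h2' (j - 2) (by omega)
              simpa [show j - 2 + 1 = j - 1 by omega] using this
            have hsd : (e (j - 1) \ e (j - 2)).Nonempty := by
              rw [← Finset.card_pos]
              have hadd := Finset.card_sdiff_add_card_inter (e (j - 1)) (e (j - 2))
              rw [Finset.inter_comm] at hadd
              omega
            obtain ⟨u, hu⟩ := hsd
            rw [Finset.mem_sdiff] at hu
            refine ⟨u, hu.1, ?_⟩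
            intro i hi
            by_cases hij2 : i = j - 2
            · rw [hij2]; exact hu.2
            · have hdis := h3' i (j - 1) (by omega) (by omega)
              intro hmem
              have : u ∈ e i ∩ e (j - 1) := Finset.mem_inter.mpr ⟨hmem, hu.1⟩
              rw [hdis] at this
              exact absurd this (Finset.notMem_empty u)
        obtain ⟨u, hu1, hu2⟩ := hufree
        set U : Finset ℕ := (Finset.range j).biUnion e with hU
        have huU : u ∈ U := Finset.mem_biUnion.mpr ⟨j - 1, Finset.mem_range.mpr (by omega), hu1⟩
        have hUcard : U.card ≤ 3 * j := by
          calc U.card ≤ ∑ i ∈ Finset.range j, (e i).card := Finset.card_biUnion_le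
            _ ≤ ∑ _i ∈ Finset.range j, 3 :=
                Finset.sum_le_sum (fun i hi => le_of_eq (hH3 _ (h1' i (Finset.mem_range.mp hi))))
            _ = 3 * j := by simp [mul_comm]
        set A := H.filter (fun f => u ∈ f) with hAdef
        have hA : d < A.card := hdeg u (e (j - 1)) (h1' _ (by omega)) hu1
        set Bad := A.filter (fun f => (f ∩ (U.erase u)).Nonempty) with hBaddef
        have hBadsub : Bad ⊆ (U.erase u).biUnion (fun w => H.filter (fun f => u ∈ f ∧ w ∈ f)) := by
          intro f hf
          rw [hBaddef, Finset.mem_filter] at hf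
          obtain ⟨hfA, w, hw⟩ := hf
          rw [Finset.mem_inter] at hw
          rw [hAdef, Finset.mem_filter] at hfA
          exact Finset.mem_biUnion.mpr ⟨w, hw.2, Finset.mem_filter.mpr ⟨hfA.1, hfA.2, hw.1⟩⟩
        have hBadcard : Bad.card ≤ 3 * k * t' := by
          calc Bad.card ≤ ((U.erase u).biUnion (fun w => H.filter (fun f => u ∈ f ∧ w ∈ f))).card :=
                Finset.card_le_card hBadsub
            _ ≤ ∑ w ∈ U.erase u, (H.filter (fun f => u ∈ f ∧ w ∈ f)).card := Finset.card_biUnion_le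
            _ ≤ ∑ _w ∈ U.erase u, t' := by
                refine Finset.sum_le_sum (fun w hw => ?_)
                exact hco u w (Ne.symm (Finset.mem_erase.mp hw).1)
            _ = (U.erase u).card * t' := by rw [Finset.sum_const, smul_eq_mul]
            _ ≤ (3 * k) * t' := by
                have h1 : (U.erase u).card ≤ U.card := Finset.card_le_card (Finset.erase_subset _ _)
                have h2 : U.card ≤ 3 * k := le_trans hUcard (by omega)
                exact Nat.mul_le_mul_right _ (le_trans h1 h2)
        have hgood : ∃ g ∈ A, ¬(g ∩ (U.erase u)).Nonempty := by
          by_contra hcon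
          push_neg at hcon
          have : A ⊆ Bad := by
            intro f hf
            exact Finset.mem_filter.mpr ⟨hf, hcon f hf⟩
          have := Finset.card_le_card this
          omega
        obtain ⟨g, hgA, hgdisj⟩ := hgood
        rw [Finset.not_nonempty_iff_eq_empty] at hgdisj
        rw [hAdef, Finset.mem_filter] at hgA
        obtain ⟨hgH, hug⟩ := hgA
        have hsub : ∀ x, x ∈ g → x ∈ U → x = u := by
          intro x hxg hxU
          by_contra hxu
          have : x ∈ g ∩ (U.erase u) :=
            Finset.mem_inter.mpr ⟨hxg, Finset.mem_erase.mpr ⟨hxu, hxU⟩⟩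
          rw [hgdisj] at this
          exact absurd this (Finset.notMem_empty x)
        have hdisj : ∀ i, i < j - 1 → g ∩ e i = ∅ := by
          intro i hi
          rw [Finset.eq_empty_iff_forall_notMem]
          intro x hx
          rw [Finset.mem_inter] at hx
          have hxU : x ∈ U := Finset.mem_biUnion.mpr ⟨i, Finset.mem_range.mpr (by omega), hx.2⟩
          have := hsub x hx.1 hxU
          subst this
          exact hu2 i hi hx.2
        have hlast : g ∩ e (j - 1) = {u} := by
          ext x
          rw [Finset.mem_inter, Finset.mem_singleton]
          constructor
          · rintro ⟨hxg, hxe⟩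
            exact hsub x hxg (Finset.mem_biUnion.mpr ⟨j - 1, Finset.mem_range.mpr (by omega), hxe⟩)
          · rintro rfl
            exact ⟨hug, hu1⟩
        exact ⟨_, LPn_extend hj1 hH3 ⟨h1', h2', h3', h4'⟩ hgH hu1 hdisj hlast⟩
  obtain ⟨e, hp⟩ := main k hk le_rfl
  exact hasLoosePath_of_LPn hp

/-- P_k-free + bounded codegree ⇒ linearly many edges. -/
lemma card_le_of_no_path {k t' d : ℕ} (hk : 1 ≤ k) (hd : 3 * k * t' < d)
    {H : Finset (Finset ℕ)}
    (hH3 : ∀ f ∈ H, f.card = 3)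
    (hco : ∀ a b : ℕ, a ≠ b → (H.filter (fun e => a ∈ e ∧ b ∈ e)).card ≤ t')
    (hnp : ¬ HasLoosePath k H) :
    H.card ≤ d * (H.sup id).card := by
  suffices h : ∀ N (H : Finset (Finset ℕ)), (H.sup id).card ≤ N →
      (∀ f ∈ H, f.card = 3) →
      (∀ a b : ℕ, a ≠ b → (H.filter (fun e => a ∈ e ∧ b ∈ e)).card ≤ t') →
      ¬ HasLoosePath k H → H.card ≤ d * (H.sup id).card by
    exact h (H.sup id).card H le_rfl hH3 hco hnp
  clear hH3 hco hnp H
  intro N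
  induction N with
  | zero =>
    intro H hsup hH3 hco hnp
    have hemp : H = ∅ := by
      by_contra hne
      rw [← Ne, ← Finset.nonempty_iff_ne_empty] at hne
      obtain ⟨f, hf⟩ := hne
      have hsub : f ⊆ H.sup id := Finset.le_sup (f := id) hf
      have := Finset.card_le_card hsub
      have := hH3 f hf
      omega
    simp [hemp]
  | succ N ih =>
    intro H hsup hH3 hco hnp
    by_cases hE : ∃ v ∈ H.sup id, (H.filter (fun e => v ∈ e)).card ≤ d
    · obtain ⟨v, hv, hvdeg⟩ := hE
      set H' := H.filter (fun e => v ∉ e) with hH'def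
      have hsplit : (H.filter (fun e => v ∈ e)).card + H'.card = H.card :=
        Finset.card_filter_add_card_filter_not _
      have hsub' : H'.sup id ⊆ (H.sup id).erase v := by
        rw [← Finset.le_iff_subset]
        apply Finset.sup_le
        intro e he
        rw [hH'def, Finset.mem_filter] at he
        show e ⊆ (H.sup id).erase v
        rw [Finset.subset_erase]
        exact ⟨Finset.le_sup (f := id) he.1, he.2⟩
      have hvpos : 1 ≤ (H.sup id).card := Finset.card_pos.mpr ⟨v, hv⟩
      have hcards : (H'.sup id).card ≤ N := by
        have h1 := Finset.card_le_card hsub'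
        have h2 : ((H.sup id).erase v).card = (H.sup id).card - 1 :=
          Finset.card_erase_of_mem hv
        omega
      have hH'card := ih H' hcards
        (fun f hf => hH3 f (Finset.mem_filter.mp hf).1)
        (fun a b hab => le_trans
          (Finset.card_le_card (Finset.filter_subset_filter _ (Finset.filter_subset _ _)))
          (hco a b hab))
        (fun hlp => hnp (hasLoosePath_mono (Finset.filter_subset _ _) hlp))
      have hmono : d * (H'.sup id).card ≤ d * ((H.sup id).card - 1) := by
        apply Nat.mul_le_mul_left
        have h1 := Finset.card_le_card hsub'
        have h2 : ((H.sup id).erase v).card = (H.sup id).card - 1 :=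
          Finset.card_erase_of_mem hv
        omega
      have hfin : d * ((H.sup id).card - 1) + d = d * (H.sup id).card := by
        obtain ⟨m, hm⟩ : ∃ m, (H.sup id).card = m + 1 := ⟨(H.sup id).card - 1, by omega⟩
        rw [hm, Nat.add_sub_cancel, Nat.mul_add, Nat.mul_one]
      omega
    · push_neg at hE
      by_cases hne : H.Nonempty
      · exfalso
        apply hnp
        refine hasLoosePath_of_minDeg hk hd hH3 hne ?_ hco
        intro u f hf huf
        refine hE u ?_
        have hsub : f ⊆ H.sup id := Finset.le_sup (f := id) hf
        exact hsub huf
      · rw [Finset.not_nonempty_iff_eq_empty] at hne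
        simp [hne]

/-- ℕ-indexed graph path with `m` vertices. -/
def GPn (m : ℕ) (v : ℕ → ℕ) (G : Finset (Finset ℕ)) : Prop :=
  (∀ i, i + 1 < m → ({v i, v (i + 1)} : Finset ℕ) ∈ G) ∧
  (∀ i j, i < j → j < m → v i ≠ v j)

lemma exists_gpath_of_minDeg {k : ℕ} (hk : 1 ≤ k) {G : Finset (Finset ℕ)}
    (hG2 : ∀ p ∈ G, p.card = 2) (hne : G.Nonempty)
    (hdeg : ∀ u p, p ∈ G → u ∈ p → k < (G.filter (fun q => u ∈ q)).card) :
    ∃ v, GPn (k + 1) v G := by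
  have main : ∀ j, 2 ≤ j → j ≤ k + 1 → ∃ v, GPn j v G := by
    intro j
    induction j with
    | zero => intro h; omega
    | succ j ih =>
      intro h2j hjk
      by_cases hj1 : j = 1
      · obtain ⟨p, hp⟩ := hne
        obtain ⟨a, b, hab, hpab⟩ := Finset.card_eq_two.mp (hG2 p hp)
        subst hj1
        refine ⟨fun i => if i = 0 then a else b, ?_, ?_⟩
        · intro i hi
          have hi0 : i = 0 := by omega
          subst hi0
          simpa [← hpab] using hp
        · intro i j hij hj
          have : i = 0 ∧ j = 1 := by omega
          obtain ⟨rfl, rfl⟩ := this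
          simpa using hab
      · have hj2 : 2 ≤ j := by omega
        obtain ⟨v, hv1, hv2⟩ := ih hj2 (by omega)
        set u := v (j - 1) with hudef
        have hp0 : ({v (j - 2), v (j - 1)} : Finset ℕ) ∈ G := by
          have := hv1 (j - 2) (by omega)
          simpa [show j - 2 + 1 = j - 1 by omega] using this
        have hdegu : k < (G.filter (fun q => u ∈ q)).card :=
          hdeg u _ hp0 (by simp [hudef])
        set Uv := (Finset.range j).image v with hUvdef
        have hUvcard : Uv.card ≤ j := le_trans Finset.card_image_le (by simp)
        set Bad := (G.filter (fun q => u ∈ q)).filter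
          (fun q => ((q.erase u) ∩ Uv).Nonempty) with hBaddef
        have hBadsub : Bad ⊆ Uv.biUnion (fun w => G.filter (fun q => q = {u, w})) := by
          intro q hq
          rw [hBaddef, Finset.mem_filter] at hq
          obtain ⟨hq1, x, hx⟩ := hq
          rw [Finset.mem_filter] at hq1
          rw [Finset.mem_inter, Finset.mem_erase] at hx
          have hqx : q = {u, x} := by
            have hsub : ({u, x} : Finset ℕ) ⊆ q := by
              intro y hy
              rcases Finset.mem_insert.mp hy with rfl | hy
              · exact hq1.2
              · rw [Finset.mem_singleton] at hy; subst hy; exact hx.1.2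
            have hcx : ({u, x} : Finset ℕ).card = 2 := by
              rw [Finset.card_insert_of_notMem (by simp [Ne.symm hx.1.1]),
                Finset.card_singleton]
            exact (Finset.eq_of_subset_of_card_le hsub (by rw [hG2 q hq1.1, hcx])).symm
          exact Finset.mem_biUnion.mpr ⟨x, hx.2, Finset.mem_filter.mpr ⟨hq1.1, hqx⟩⟩
        have hBadcard : Bad.card ≤ j := by
          calc Bad.card ≤ (Uv.biUnion (fun w => G.filter (fun q => q = {u, w}))).card :=
                Finset.card_le_card hBadsub
            _ ≤ ∑ w ∈ Uv, (G.filter (fun q => q = {u, w})).card := Finset.card_biUnion_le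
            _ ≤ ∑ _w ∈ Uv, 1 := by
                refine Finset.sum_le_sum (fun w hw => ?_)
                have : G.filter (fun q => q = {u, w}) ⊆ {({u, w} : Finset ℕ)} := by
                  intro q hq
                  rw [Finset.mem_filter] at hq
                  simp [hq.2]
                simpa using Finset.card_le_card this
            _ ≤ j := by simpa using hUvcard
        have hgood : ∃ q ∈ G.filter (fun q => u ∈ q), ¬((q.erase u) ∩ Uv).Nonempty := by
          by_contra hcon
          push_neg at hcon
          have hsub2 : G.filter (fun q => u ∈ q) ⊆ Bad := by
            intro q hq
            exact Finset.mem_filter.mpr ⟨hq, hcon q hq⟩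
          have := Finset.card_le_card hsub2
          omega
        obtain ⟨q, hqmem, hqdisj⟩ := hgood
        rw [Finset.not_nonempty_iff_eq_empty] at hqdisj
        rw [Finset.mem_filter] at hqmem
        obtain ⟨hqG, huq⟩ := hqmem
        have herase : (q.erase u).card = 1 := by
          rw [Finset.card_erase_of_mem huq, hG2 q hqG]
        obtain ⟨x, hx⟩ := Finset.card_eq_one.mp herase
        have hxq : x ∈ q.erase u := by rw [hx]; exact Finset.mem_singleton_self x
        have hxu : x ≠ u := (Finset.mem_erase.mp hxq).1
        have hqux : q = {u, x} := by
          rw [← Finset.insert_erase huq, hx]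
        have hxUv : x ∉ Uv := by
          intro hmem
          have : x ∈ q.erase u ∩ Uv := Finset.mem_inter.mpr ⟨hxq, hmem⟩
          rw [hqdisj] at this
          exact absurd this (Finset.notMem_empty x)
        refine ⟨fun m => if m = j then x else v m, ?_, ?_⟩
        · intro i hi
          have hij : i ≠ j := by omega
          by_cases h : i + 1 = j
          · have hieq : i = j - 1 := by omega
            simp only [if_neg hij, if_pos h]
            rw [hieq, ← hudef, ← hqux]
            exact hqG
          · have : i + 1 < j := by omega
            simp only [if_neg hij, if_neg h]
            exact hv1 i this
        · intro i j2 hij2 hj2'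
          have hij : i ≠ j := by omega
          by_cases h : j2 = j
          · simp only [if_neg hij, if_pos h]
            intro heq
            apply hxUv
            rw [hUvdef, ← heq]
            exact Finset.mem_image.mpr ⟨i, Finset.mem_range.mpr (by omega), rfl⟩
          · simp only [if_neg hij, if_neg h]
            exact hv2 i j2 hij2 (by omega)
  exact main (k + 1) (by omega) le_rfl

/-- Graphs with no path of `k` edges are sparse. -/
lemma graph_sparse {k : ℕ} (hk : 1 ≤ k) {G : Finset (Finset ℕ)}
    (hG2 : ∀ p ∈ G, p.card = 2)
    (hnp : ¬ ∃ v, GPn (k + 1) v G) : G.card ≤ k * (G.sup id).card := by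
  suffices h : ∀ N (G : Finset (Finset ℕ)), (G.sup id).card ≤ N →
      (∀ p ∈ G, p.card = 2) →
      (¬ ∃ v, GPn (k + 1) v G) → G.card ≤ k * (G.sup id).card by
    exact h (G.sup id).card G le_rfl hG2 hnp
  clear hG2 hnp G
  intro N
  induction N with
  | zero =>
    intro G hsup hG2 hnp
    have hemp : G = ∅ := by
      by_contra hne
      rw [← Ne, ← Finset.nonempty_iff_ne_empty] at hne
      obtain ⟨p, hp⟩ := hne
      have hsub : p ⊆ G.sup id := Finset.le_sup (f := id) hp
      have := Finset.card_le_card hsub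
      have := hG2 p hp
      omega
    simp [hemp]
  | succ N ih =>
    intro G hsup hG2 hnp
    by_cases hE : ∃ v ∈ G.sup id, (G.filter (fun q => v ∈ q)).card ≤ k
    · obtain ⟨v, hv, hvdeg⟩ := hE
      set G' := G.filter (fun q => v ∉ q) with hG'def
      have hsplit : (G.filter (fun q => v ∈ q)).card + G'.card = G.card :=
        Finset.card_filter_add_card_filter_not _
      have hsub' : G'.sup id ⊆ (G.sup id).erase v := by
        rw [← Finset.le_iff_subset]
        apply Finset.sup_le
        intro q hq
        rw [hG'def, Finset.mem_filter] at hq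
        show q ⊆ (G.sup id).erase v
        rw [Finset.subset_erase]
        exact ⟨Finset.le_sup (f := id) hq.1, hq.2⟩
      have hvpos : 1 ≤ (G.sup id).card := Finset.card_pos.mpr ⟨v, hv⟩
      have hcards : (G'.sup id).card ≤ N := by
        have h1 := Finset.card_le_card hsub'
        have h2 : ((G.sup id).erase v).card = (G.sup id).card - 1 :=
          Finset.card_erase_of_mem hv
        omega
      have hG'card := ih G' hcards
        (fun p hp => hG2 p (Finset.mem_filter.mp hp).1)
        (fun ⟨w, hw1, hw2⟩ => hnp ⟨w,
          fun i hi => Finset.filter_subset _ _ (hw1 i hi), hw2⟩)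
      have hmono : k * (G'.sup id).card ≤ k * ((G.sup id).card - 1) := by
        apply Nat.mul_le_mul_left
        have h1 := Finset.card_le_card hsub'
        have h2 : ((G.sup id).erase v).card = (G.sup id).card - 1 :=
          Finset.card_erase_of_mem hv
        omega
      have hfin : k * ((G.sup id).card - 1) + k = k * (G.sup id).card := by
        obtain ⟨m, hm⟩ : ∃ m, (G.sup id).card = m + 1 := ⟨(G.sup id).card - 1, by omega⟩
        rw [hm, Nat.add_sub_cancel, Nat.mul_add, Nat.mul_one]
      omega
    · push_neg at hE
      by_cases hne : G.Nonempty
      · exfalso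
        apply hnp
        refine exists_gpath_of_minDeg hk hG2 hne ?_
        intro u p hp hup
        refine hE u ?_
        have hsub : p ⊆ G.sup id := Finset.le_sup (f := id) hp
        exact hsub hup
      · rw [Finset.not_nonempty_iff_eq_empty] at hne
        simp [hne]

/-- Claim 1: a path in the heavy-pair graph yields a loose path. -/
lemma no_gpath_in_heavy {k t : ℕ} (hk : 1 ≤ k) (ht : 4 * k + 2 ≤ t)
    {H : Finset (Finset ℕ)} (hH3 : ∀ f ∈ H, f.card = 3)
    (hnp : ¬ HasLoosePath k H)
    {G : Finset (Finset ℕ)} (hG2 : ∀ p ∈ G, p.card = 2)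
    (hGheavy : ∀ p ∈ G, t ≤ (H.filter (fun e => p ⊆ e)).card) :
    ¬ ∃ v, GPn (k + 1) v G := by
  rintro ⟨v, hv1, hv2⟩
  apply hnp
  set Vset := (Finset.range (k + 1)).image v with hVdef
  have hvmem : ∀ r, r ≤ k → v r ∈ Vset := fun r hr =>
    Finset.mem_image.mpr ⟨r, Finset.mem_range.mpr (by omega), rfl⟩
  have hvinj : ∀ r s, r ≤ k → s ≤ k → v r = v s → r = s := by
    intro r s hr hs heq
    by_contra hne
    rcases Nat.lt_or_ge r s with h | h
    · exact hv2 r s h (by omega) heq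
    · exact hv2 s r (by omega) (by omega) heq.symm
  have hVcard : Vset.card ≤ k + 1 := le_trans Finset.card_image_le (by simp)
  have hpair : ∀ i, i < k → ({v i, v (i + 1)} : Finset ℕ) ∈ G := fun i hi => hv1 i (by omega)
  have hpaircard : ∀ i, i < k → ({v i, v (i + 1)} : Finset ℕ).card = 2 := by
    intro i hi
    rw [Finset.card_insert_of_notMem, Finset.card_singleton]
    simp only [Finset.mem_singleton]
    intro heq
    have := hvinj i (i + 1) (by omega) (by omega) heq
    omega
  have hchoose : ∀ i (F : Finset ℕ), i < k → F.card ≤ 4 * k + 1 →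
      ∃ g ∈ H, ({v i, v (i + 1)} : Finset ℕ) ⊆ g ∧ (g \ {v i, v (i + 1)}) ∩ F = ∅ := by
    intro i F hi hF
    set p : Finset ℕ := {v i, v (i + 1)} with hpdef
    have hheavy := hGheavy p (hpair i hi)
    set A := H.filter (fun f => p ⊆ f) with hAdef
    set Bad := A.filter (fun f => ((f \ p) ∩ F).Nonempty) with hBaddef
    have hBadsub : Bad ⊆ F.biUnion (fun x => A.filter (fun f => f = insert x p)) := by
      intro f hf
      rw [hBaddef, Finset.mem_filter] at hf
      obtain ⟨hfA, x, hx⟩ := hf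
      rw [Finset.mem_inter, Finset.mem_sdiff] at hx
      have hfA' := Finset.mem_filter.mp hfA
      have hfeq : f = insert x p := by
        have hsubp : insert x p ⊆ f := Finset.insert_subset hx.1.1 hfA'.2
        have hcx : (insert x p).card = 3 := by
          rw [Finset.card_insert_of_notMem hx.1.2, hpaircard i hi]
        exact (Finset.eq_of_subset_of_card_le hsubp
          (by rw [hH3 f hfA'.1, hcx])).symm
      exact Finset.mem_biUnion.mpr ⟨x, hx.2, Finset.mem_filter.mpr ⟨hfA, hfeq⟩⟩
    have hBadcard : Bad.card ≤ 4 * k + 1 := by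
      calc Bad.card ≤ (F.biUnion (fun x => A.filter (fun f => f = insert x p))).card :=
            Finset.card_le_card hBadsub
        _ ≤ ∑ x ∈ F, (A.filter (fun f => f = insert x p)).card := Finset.card_biUnion_le
        _ ≤ ∑ _x ∈ F, 1 := by
            refine Finset.sum_le_sum (fun x hx => ?_)
            have hsb : A.filter (fun f => f = insert x p) ⊆ {insert x p} := by
              intro q hq
              rw [Finset.mem_filter] at hq
              simp [hq.2]
            simpa using Finset.card_le_card hsb
        _ ≤ 4 * k + 1 := by simpa using hF
    have hgood : ∃ g ∈ A, ¬((g \ p) ∩ F).Nonempty := by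
      by_contra hcon
      push_neg at hcon
      have hsb : A ⊆ Bad := fun f hf => Finset.mem_filter.mpr ⟨hf, hcon f hf⟩
      have := Finset.card_le_card hsb
      omega
    obtain ⟨g, hgA, hgdisj⟩ := hgood
    rw [Finset.not_nonempty_iff_eq_empty] at hgdisj
    have hgA' := Finset.mem_filter.mp hgA
    exact ⟨g, hgA'.1, hgA'.2, hgdisj⟩
  have main : ∀ i, 1 ≤ i → i ≤ k → ∃ e, LPn i e H ∧
      (∀ r, r < i → v (r + 1) ∈ e r) ∧
      (∀ r, r < i → e r ∩ Vset = {v r, v (r + 1)}) := by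
    intro i
    induction i with
    | zero => intro h; omega
    | succ i ih =>
      intro _ hik
      by_cases hi0 : i = 0
      · subst hi0
        obtain ⟨g, hgH, hgsub, hgdisj⟩ := hchoose 0 Vset (by omega) (by omega)
        refine ⟨fun _ => g, ⟨fun r hr => hgH, ?_, ?_, ?_⟩, ?_, ?_⟩
        · intro r hr; omega
        · intro r s h1 h2; omega
        · intro r s h1 h2; omega
        · intro r hr
          have hr0 : r = 0 := by omega
          subst hr0
          exact hgsub (by simp)
        · intro r hr
          have hr0 : r = 0 := by omega
          subst hr0
          apply Finset.Subset.antisymm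
          · intro x hx
            rw [Finset.mem_inter] at hx
            by_cases hxp : x ∈ ({v 0, v 1} : Finset ℕ)
            · exact hxp
            · exfalso
              have hmem : x ∈ (g \ {v 0, v 1}) ∩ Vset :=
                Finset.mem_inter.mpr ⟨Finset.mem_sdiff.mpr ⟨hx.1, hxp⟩, hx.2⟩
              rw [hgdisj] at hmem
              exact Finset.notMem_empty _ hmem
          · intro x hx
            rcases Finset.mem_insert.mp hx with rfl | hx
            · exact Finset.mem_inter.mpr ⟨hgsub (by simp), hvmem 0 (by omega)⟩
            · rw [Finset.mem_singleton] at hx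
              subst hx
              exact Finset.mem_inter.mpr ⟨hgsub (by simp), hvmem 1 (by omega)⟩
      · have hi1 : 1 ≤ i := by omega
        obtain ⟨e, hLP, hI3, hI4⟩ := ih hi1 (by omega)
        obtain ⟨h1', h2', h3', h4'⟩ := hLP
        set U := (Finset.range i).biUnion e with hUdef
        have hUcard : U.card ≤ 3 * i := by
          calc U.card ≤ ∑ r ∈ Finset.range i, (e r).card := Finset.card_biUnion_le
            _ ≤ ∑ _r ∈ Finset.range i, 3 :=
                Finset.sum_le_sum (fun r hr => le_of_eq (hH3 _ (h1' r (Finset.mem_range.mp hr))))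
            _ = 3 * i := by simp [mul_comm]
        have hFcard : (U ∪ Vset).card ≤ 4 * k + 1 := by
          have := Finset.card_union_le U Vset
          omega
        obtain ⟨g, hgH, hgsub, hgdisj⟩ := hchoose i (U ∪ Vset) (by omega) hFcard
        have hgx : ∀ x, x ∈ g → x ∉ ({v i, v (i + 1)} : Finset ℕ) → x ∉ U ∧ x ∉ Vset := by
          intro x hxg hxp
          constructor
          · intro hmem
            have hm2 : x ∈ (g \ {v i, v (i + 1)}) ∩ (U ∪ Vset) :=
              Finset.mem_inter.mpr ⟨Finset.mem_sdiff.mpr ⟨hxg, hxp⟩,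
                Finset.mem_union_left _ hmem⟩
            rw [hgdisj] at hm2
            exact Finset.notMem_empty _ hm2
          · intro hmem
            have hm2 : x ∈ (g \ {v i, v (i + 1)}) ∩ (U ∪ Vset) :=
              Finset.mem_inter.mpr ⟨Finset.mem_sdiff.mpr ⟨hxg, hxp⟩,
                Finset.mem_union_right _ hmem⟩
            rw [hgdisj] at hm2
            exact Finset.notMem_empty _ hm2
        have hvnotin : ∀ m r, m ≤ k → r < i → v m ∈ e r → (m = r ∨ m = r + 1) := by
          intro m r hm hr hmem
          have h4 := hI4 r hr
          have hmm : v m ∈ e r ∩ Vset := Finset.mem_inter.mpr ⟨hmem, hvmem m hm⟩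
          rw [h4] at hmm
          rcases Finset.mem_insert.mp hmm with heq | heq
          · exact Or.inl (hvinj m r hm (by omega) heq)
          · rw [Finset.mem_singleton] at heq
            exact Or.inr (hvinj m (r + 1) hm (by omega) heq)
        have hvi_mem : v i ∈ e (i - 1) := by
          have := hI3 (i - 1) (by omega)
          simpa [show i - 1 + 1 = i by omega] using this
        have hvi_not : ∀ r, r < i - 1 → v i ∉ e r := by
          intro r hr hmem
          rcases hvnotin i r (by omega) (by omega) hmem with h | h <;> omega
        have hvi1_not : ∀ r, r < i → v (i + 1) ∉ e r := by
          intro r hr hmem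
          rcases hvnotin (i + 1) r (by omega) hr hmem with h | h <;> omega
        have heU : ∀ r, r < i → e r ⊆ U := fun r hr =>
          Finset.subset_biUnion_of_mem e (Finset.mem_range.mpr hr)
        have hdisj : ∀ r, r < i - 1 → g ∩ e r = ∅ := by
          intro r hr
          rw [Finset.eq_empty_iff_forall_notMem]
          intro x hx
          rw [Finset.mem_inter] at hx
          by_cases hxp : x ∈ ({v i, v (i + 1)} : Finset ℕ)
          · rcases Finset.mem_insert.mp hxp with rfl | hxp'
            · exact hvi_not r hr hx.2
            · rw [Finset.mem_singleton] at hxp'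
              subst hxp'
              exact hvi1_not r (by omega) hx.2
          · exact (hgx x hx.1 hxp).1 (heU r (by omega) hx.2)
        have hlast : g ∩ e (i - 1) = {v i} := by
          apply Finset.Subset.antisymm
          · intro x hx
            rw [Finset.mem_inter] at hx
            by_cases hxp : x ∈ ({v i, v (i + 1)} : Finset ℕ)
            · rcases Finset.mem_insert.mp hxp with rfl | hxp'
              · exact Finset.mem_singleton_self _
              · rw [Finset.mem_singleton] at hxp'
                subst hxp'
                exact absurd hx.2 (hvi1_not (i - 1) (by omega))
            · exact absurd (heU (i - 1) (by omega) hx.2) (hgx x hx.1 hxp).1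
          · intro x hx
            rw [Finset.mem_singleton] at hx
            subst hx
            exact Finset.mem_inter.mpr ⟨hgsub (by simp), hvi_mem⟩
        have hext := LPn_extend hi1 hH3 ⟨h1', h2', h3', h4'⟩ hgH hvi_mem hdisj hlast
        refine ⟨fun x => if x = i then g else e x, hext, ?_, ?_⟩
        · intro r hr
          by_cases h : r = i
          · subst h
            simp only [if_pos rfl]
            exact hgsub (by simp)
          · simp only [if_neg h]
            exact hI3 r (by omega)
        · intro r hr
          by_cases h : r = i
          · subst h
            simp only [if_pos rfl]
            apply Finset.Subset.antisymm
            · intro x hx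
              rw [Finset.mem_inter] at hx
              by_cases hxp : x ∈ ({v r, v (r + 1)} : Finset ℕ)
              · exact hxp
              · exact absurd hx.2 (hgx x hx.1 hxp).2
            · intro x hx
              rcases Finset.mem_insert.mp hx with rfl | hx'
              · exact Finset.mem_inter.mpr ⟨hgsub (by simp), hvmem r (by omega)⟩
              · rw [Finset.mem_singleton] at hx'
                subst hx'
                exact Finset.mem_inter.mpr ⟨hgsub (by simp), hvmem (r + 1) (by omega)⟩
          · simp only [if_neg h]
            exact hI4 r (by omega)
  obtain ⟨e, hLP, _, _⟩ := main k hk le_rfl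
  exact hasLoosePath_of_LPn hLP

end LPC

/-- For every `k ≥ 1` there is `c > 0` such that for all `n > 0`, the number of
3-uniform hypergraphs on `[n]` containing no loose path of length `k` is at most
`2^(c·n²)`. -/
theorem number_of_Pk_free_triple_systems (k : ℕ) (hk : 1 ≤ k) :
    ∃ c : ℝ, 0 < c ∧ ∀ n : ℕ, 0 < n →
      (({H : Finset (Finset ℕ) |
          H ⊆ (Finset.Icc 1 n).powersetCard 3 ∧ ¬ HasLoosePath k H} : Set _).ncard : ℝ)
        ≤ (2 : ℝ) ^ (c * (n : ℝ) ^ 2) := by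
  classical
  set t : ℕ := 4 * k + 2 with htdef
  set t' : ℕ := 4 * k + 1 with ht'def
  set d : ℕ := 3 * k * t' + 1 with hddef
  set C : ℕ := 1 + k + 5 * d with hCdef
  have hC1 : 1 ≤ C := by rw [hCdef]; omega
  have hdlt : 3 * k * t' < d := by rw [hddef]; exact Nat.lt_succ_self _
  refine ⟨(C : ℝ), by exact_mod_cast hC1, ?_⟩
  intro n hn
  set V : Finset ℕ := Finset.Icc 1 n with hVdef
  have hVcard : V.card = n := by rw [hVdef, Nat.card_Icc]; omega
  set T3 : Finset (Finset ℕ) := V.powersetCard 3 with hT3def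
  set T2 : Finset (Finset ℕ) := V.powersetCard 2 with hT2def
  have hsupV : ∀ (S : Finset (Finset ℕ)), (∀ f ∈ S, f ⊆ V) → (S.sup id).card ≤ n := by
    intro S hS
    have hsub : S.sup id ⊆ V := by
      rw [← Finset.le_iff_subset]
      apply Finset.sup_le
      intro f hf
      show f ⊆ V
      exact hS f hf
    have := Finset.card_le_card hsub
    omega
  set Fam : Finset (Finset (Finset ℕ)) :=
    T3.powerset.filter (fun H => ¬ HasLoosePath k H) with hFamdef
  have hset : ({H : Finset (Finset ℕ) |
      H ⊆ (Finset.Icc 1 n).powersetCard 3 ∧ ¬ HasLoosePath k H} : Set _) = ↑Fam := by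
    ext H
    simp [hFamdef, Finset.mem_powerset, hT3def, hVdef]
  rw [hset, Set.ncard_coe_finset]
  -- the heavy pair graph of H
  set Gam : Finset (Finset ℕ) → Finset (Finset ℕ) :=
    fun H => T2.filter (fun p => t ≤ (H.filter (fun e => p ⊆ e)).card) with hGamdef
  set cov : Finset (Finset ℕ) → Finset (Finset ℕ) :=
    fun G => T3.filter (fun e => ∃ p ∈ G, p ⊆ e) with hcovdef
  set 𝒢 : Finset (Finset (Finset ℕ)) :=
    T2.powerset.filter (fun G => G.card ≤ k * n) with h𝒢def
  set 𝒜 : Finset (Finset (Finset ℕ)) := 𝒢.biUnion (fun G => (cov G).powerset) with h𝒜def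
  set ℬ : Finset (Finset (Finset ℕ)) :=
    T3.powerset.filter (fun B => B.card ≤ d * n) with hℬdef
  -- basic facts about members of Fam
  have hFamfacts : ∀ H ∈ Fam, H ⊆ T3 ∧ ¬ HasLoosePath k H := by
    intro H hH
    rw [hFamdef, Finset.mem_filter, Finset.mem_powerset] at hH
    exact hH
  have hT3facts : ∀ e ∈ T3, e ⊆ V ∧ e.card = 3 := by
    intro e he
    rw [hT3def, Finset.mem_powersetCard] at he
    exact he
  have hT2facts : ∀ p ∈ T2, p ⊆ V ∧ p.card = 2 := by
    intro p hp
    rw [hT2def, Finset.mem_powersetCard] at hp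
    exact hp
  -- the heavy graph is small
  have hGamcard : ∀ H ∈ Fam, (Gam H).card ≤ k * n := by
    intro H hH
    obtain ⟨hsub, hnp⟩ := hFamfacts H hH
    have hH3 : ∀ f ∈ H, f.card = 3 := fun f hf => (hT3facts f (hsub hf)).2
    have hG2 : ∀ p ∈ Gam H, p.card = 2 := fun p hp =>
      (hT2facts p (Finset.filter_subset _ _ hp)).2
    have hGheavy : ∀ p ∈ Gam H, t ≤ (H.filter (fun e => p ⊆ e)).card := fun p hp =>
      (Finset.mem_filter.mp hp).2
    have hng := LPC.no_gpath_in_heavy hk (le_of_eq htdef.symm) hH3 hnp hG2 hGheavy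
    refine le_trans (LPC.graph_sparse hk hG2 hng) ?_
    exact Nat.mul_le_mul_left k
      (hsupV (Gam H) (fun p hp => (hT2facts p (Finset.filter_subset _ _ hp)).1))
  -- covered sets are small
  have hcovcard : ∀ G ∈ 𝒢, (cov G).card ≤ k * n * n := by
    intro G hG
    rw [h𝒢def, Finset.mem_filter, Finset.mem_powerset] at hG
    have hsub : cov G ⊆ G.biUnion (fun p => V.image (fun x => insert x p)) := by
      intro e he
      rw [hcovdef, Finset.mem_filter] at he
      obtain ⟨heT3, p, hpG, hpe⟩ := he
      obtain ⟨heV, he3⟩ := hT3facts e heT3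
      have hp2 : p.card = 2 := (hT2facts p (hG.1 hpG)).2
      have hsd : (e \ p).Nonempty := by
        rw [← Finset.card_pos, Finset.card_sdiff_of_subset hpe, he3, hp2]
        omega
      obtain ⟨x, hx⟩ := hsd
      rw [Finset.mem_sdiff] at hx
      have hins : insert x p = e := by
        apply Finset.eq_of_subset_of_card_le
        · exact Finset.insert_subset hx.1 hpe
        · rw [he3, Finset.card_insert_of_notMem hx.2, hp2]
      exact Finset.mem_biUnion.mpr ⟨p, hpG,
        Finset.mem_image.mpr ⟨x, heV hx.1, hins⟩⟩
    calc (cov G).card ≤ (G.biUnion (fun p => V.image (fun x => insert x p))).card :=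
          Finset.card_le_card hsub
      _ ≤ ∑ p ∈ G, (V.image (fun x => insert x p)).card := Finset.card_biUnion_le
      _ ≤ ∑ _p ∈ G, n := Finset.sum_le_sum
          (fun p _ => le_trans Finset.card_image_le (le_of_eq hVcard))
      _ = G.card * n := by rw [Finset.sum_const, smul_eq_mul]
      _ ≤ k * n * n := Nat.mul_le_mul_right n hG.2
  -- the encoding map
  set Φ : Finset (Finset ℕ) → Finset (Finset ℕ) × Finset (Finset ℕ) :=
    fun H => (H.filter (fun e => ∃ p ∈ Gam H, p ⊆ e),
              H.filter (fun e => ¬ ∃ p ∈ Gam H, p ⊆ e)) with hΦdef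
  have hmaps : ∀ H ∈ Fam, Φ H ∈ 𝒜 ×ˢ ℬ := by
    intro H hH
    obtain ⟨hsub, hnp⟩ := hFamfacts H hH
    have hH3 : ∀ f ∈ H, f.card = 3 := fun f hf => (hT3facts f (hsub hf)).2
    rw [Finset.mem_product]
    constructor
    · -- heavy part
      rw [h𝒜def]
      refine Finset.mem_biUnion.mpr ⟨Gam H, ?_, ?_⟩
      · rw [h𝒢def, Finset.mem_filter, Finset.mem_powerset]
        exact ⟨Finset.filter_subset _ _, hGamcard H hH⟩
      · rw [Finset.mem_powerset]
        intro e he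
        rw [Finset.mem_filter] at he
        rw [hcovdef, Finset.mem_filter]
        exact ⟨hsub he.1, he.2⟩
    · -- light part
      set B := H.filter (fun e => ¬ ∃ p ∈ Gam H, p ⊆ e) with hBdef
      have hBsub : B ⊆ H := Finset.filter_subset _ _
      have hB3 : ∀ f ∈ B, f.card = 3 := fun f hf => hH3 f (hBsub hf)
      have hBco : ∀ a b : ℕ, a ≠ b → (B.filter (fun e => a ∈ e ∧ b ∈ e)).card ≤ t' := by
        intro a b hab
        by_contra hgt
        push_neg at hgt
        have hne : (B.filter (fun e => a ∈ e ∧ b ∈ e)).Nonempty := by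
          rw [← Finset.card_pos]; omega
        obtain ⟨e₀, he₀⟩ := hne
        rw [Finset.mem_filter] at he₀
        have he₀B := he₀.1
        have habe : a ∈ e₀ ∧ b ∈ e₀ := he₀.2
        have he₀V : e₀ ⊆ V := (hT3facts e₀ (hsub (hBsub he₀B))).1
        have hpT2 : ({a, b} : Finset ℕ) ∈ T2 := by
          rw [hT2def, Finset.mem_powersetCard]
          constructor
          · intro y hy
            rcases Finset.mem_insert.mp hy with rfl | hy
            · exact he₀V habe.1
            · rw [Finset.mem_singleton] at hy; subst hy; exact he₀V habe.2
          · rw [Finset.card_insert_of_notMem (by simpa using hab), Finset.card_singleton]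
        have hsubf : B.filter (fun e => a ∈ e ∧ b ∈ e) ⊆
            H.filter (fun e => ({a, b} : Finset ℕ) ⊆ e) := by
          intro e he
          rw [Finset.mem_filter] at he ⊢
          refine ⟨hBsub he.1, ?_⟩
          intro y hy
          rcases Finset.mem_insert.mp hy with rfl | hy
          · exact he.2.1
          · rw [Finset.mem_singleton] at hy; subst hy; exact he.2.2
        have hheavy : t ≤ (H.filter (fun e => ({a, b} : Finset ℕ) ⊆ e)).card := by
          have := Finset.card_le_card hsubf
          omega
        have hpΓ : ({a, b} : Finset ℕ) ∈ Gam H := by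
          rw [hGamdef]
          exact Finset.mem_filter.mpr ⟨hpT2, hheavy⟩
        rw [hBdef, Finset.mem_filter] at he₀B
        apply he₀B.2
        refine ⟨{a, b}, hpΓ, ?_⟩
        intro y hy
        rcases Finset.mem_insert.mp hy with rfl | hy
        · exact habe.1
        · rw [Finset.mem_singleton] at hy; subst hy; exact habe.2
      have hBnp : ¬ HasLoosePath k B := fun h => hnp (LPC.hasLoosePath_mono hBsub h)
      have hBcard : B.card ≤ d * n := by
        have h1 := LPC.card_le_of_no_path hk hdlt hB3 hBco hBnp
        refine le_trans h1 ?_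
        exact Nat.mul_le_mul_left d
          (hsupV B (fun f hf => (hT3facts f (hsub (hBsub hf))).1))
      rw [hℬdef, Finset.mem_filter, Finset.mem_powerset]
      exact ⟨fun e he => hsub (hBsub he), hBcard⟩
  have hinj : (↑Fam : Set (Finset (Finset ℕ))).InjOn Φ := by
    intro H1 _ H2 _ heq
    have h1 := congrArg Prod.fst heq
    have h2 := congrArg Prod.snd heq
    simp only [hΦdef] at h1 h2
    have e1 : H1 = H1.filter (fun e => ∃ p ∈ Gam H1, p ⊆ e) ∪
        H1.filter (fun e => ¬ ∃ p ∈ Gam H1, p ⊆ e) :=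
      (Finset.filter_union_filter_not_eq _ H1).symm
    have e2 : H2.filter (fun e => ∃ p ∈ Gam H2, p ⊆ e) ∪
        H2.filter (fun e => ¬ ∃ p ∈ Gam H2, p ⊆ e) = H2 :=
      Finset.filter_union_filter_not_eq _ H2
    rw [e1, h1, h2, e2]
  have hcount : Fam.card ≤ 𝒜.card * ℬ.card := by
    have := Finset.card_le_card_of_injOn Φ hmaps hinj
    rwa [Finset.card_product] at this
  -- size of 𝒜
  have h𝒜card : 𝒜.card ≤ 2 ^ (n ^ 2) * 2 ^ (k * n * n) := by
    calc 𝒜.card ≤ ∑ G ∈ 𝒢, ((cov G).powerset).card := by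
          rw [h𝒜def]; exact Finset.card_biUnion_le
      _ ≤ ∑ _G ∈ 𝒢, 2 ^ (k * n * n) := by
          refine Finset.sum_le_sum (fun G hG => ?_)
          rw [Finset.card_powerset]
          exact Nat.pow_le_pow_right (by omega) (hcovcard G hG)
      _ = 𝒢.card * 2 ^ (k * n * n) := by rw [Finset.sum_const, smul_eq_mul]
      _ ≤ 2 ^ (n ^ 2) * 2 ^ (k * n * n) := by
          refine Nat.mul_le_mul_right _ ?_
          have h1 : 𝒢 ⊆ T2.powerset := by rw [h𝒢def]; exact Finset.filter_subset _ _
          have h2 := Finset.card_le_card h1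
          rw [Finset.card_powerset] at h2
          refine le_trans h2 (Nat.pow_le_pow_right (by omega) ?_)
          rw [hT2def, Finset.card_powersetCard, hVcard]
          calc n.choose 2 ≤ n ^ 2 := Nat.choose_le_pow n 2
            _ = n ^ 2 := rfl
  -- size of ℬ
  have hℬcard : ℬ.card ≤ 2 ^ (d * n) * 2 ^ ((3 * n + 1) * (d * n)) := by
    have hsubB : ℬ ⊆ (Finset.range (d * n + 1)).biUnion (fun j => T3.powersetCard j) := by
      intro B hB
      rw [hℬdef, Finset.mem_filter, Finset.mem_powerset] at hB
      exact Finset.mem_biUnion.mpr ⟨B.card, Finset.mem_range.mpr (by omega),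
        Finset.mem_powersetCard.mpr ⟨hB.1, rfl⟩⟩
    have hT3card : T3.card + 1 ≤ 2 ^ (3 * n + 1) := by
      have h1 : T3.card ≤ n ^ 3 := by
        rw [hT3def, Finset.card_powersetCard, hVcard]
        exact Nat.choose_le_pow n 3
      have h2 : n ^ 3 ≤ 2 ^ (3 * n) := by
        calc n ^ 3 ≤ (2 ^ n) ^ 3 := Nat.pow_le_pow_left (le_of_lt (Nat.lt_two_pow_self (n := n))) 3
          _ = 2 ^ (3 * n) := by rw [← pow_mul, mul_comm]
      have h3 : (1 : ℕ) ≤ 2 ^ (3 * n) := Nat.one_le_two_pow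
      calc T3.card + 1 ≤ 2 ^ (3 * n) + 2 ^ (3 * n) := by omega
        _ = 2 ^ (3 * n + 1) := by rw [pow_succ]; omega
    calc ℬ.card ≤ ((Finset.range (d * n + 1)).biUnion (fun j => T3.powersetCard j)).card :=
          Finset.card_le_card hsubB
      _ ≤ ∑ j ∈ Finset.range (d * n + 1), (T3.powersetCard j).card := Finset.card_biUnion_le
      _ ≤ ∑ _j ∈ Finset.range (d * n + 1), (T3.card + 1) ^ (d * n) := by
          refine Finset.sum_le_sum (fun j hj => ?_)
          rw [Finset.card_powersetCard]
          calc T3.card.choose j ≤ T3.card ^ j := Nat.choose_le_pow _ j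
            _ ≤ (T3.card + 1) ^ j := Nat.pow_le_pow_left (by omega) j
            _ ≤ (T3.card + 1) ^ (d * n) :=
                Nat.pow_le_pow_right (by omega) (by
                  have := Finset.mem_range.mp hj; omega)
      _ = (d * n + 1) * (T3.card + 1) ^ (d * n) := by
          rw [Finset.sum_const, Finset.card_range, smul_eq_mul]
      _ ≤ 2 ^ (d * n) * 2 ^ ((3 * n + 1) * (d * n)) := by
          refine Nat.mul_le_mul ?_ ?_
          · have := Nat.lt_two_pow_self (n := d * n); omega
          · calc (T3.card + 1) ^ (d * n) ≤ (2 ^ (3 * n + 1)) ^ (d * n) :=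
                  Nat.pow_le_pow_left hT3card (d * n)
              _ = 2 ^ ((3 * n + 1) * (d * n)) := by rw [← pow_mul]
  -- combine
  have hfinal : Fam.card ≤ 2 ^ (C * n ^ 2) := by
    have hexp : n ^ 2 + k * n * n + (d * n + (3 * n + 1) * (d * n)) ≤ C * n ^ 2 := by
      have hn1 : 1 ≤ n := hn
      have h1 : d * n + (3 * n + 1) * (d * n) = 3 * d * n ^ 2 + 2 * (d * n) := by ring
      have h2 : d * n ≤ d * n ^ 2 := by
        refine Nat.mul_le_mul_left d ?_
        calc n = n * 1 := by ring
          _ ≤ n * n := Nat.mul_le_mul_left n hn1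
          _ = n ^ 2 := by ring
      have h3 : k * n * n = k * n ^ 2 := by ring
      rw [hCdef, h1, h3]
      calc n ^ 2 + k * n ^ 2 + (3 * d * n ^ 2 + 2 * (d * n))
          ≤ n ^ 2 + k * n ^ 2 + (3 * d * n ^ 2 + 2 * (d * n ^ 2)) := by omega
        _ = (1 + k + 5 * d) * n ^ 2 := by ring
    calc Fam.card ≤ 𝒜.card * ℬ.card := hcount
      _ ≤ (2 ^ (n ^ 2) * 2 ^ (k * n * n)) * (2 ^ (d * n) * 2 ^ ((3 * n + 1) * (d * n))) :=
          Nat.mul_le_mul h𝒜card hℬcard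
      _ = 2 ^ (n ^ 2 + k * n * n + (d * n + (3 * n + 1) * (d * n))) := by
          rw [← pow_add, ← pow_add, ← pow_add]
      _ ≤ 2 ^ (C * n ^ 2) := Nat.pow_le_pow_right (by omega) hexp
  -- pass to the reals
  calc (Fam.card : ℝ) ≤ ((2 ^ (C * n ^ 2) : ℕ) : ℝ) := by exact_mod_cast hfinal
    _ = (2 : ℝ) ^ ((C * n ^ 2 : ℕ) : ℝ) := by
        rw [Real.rpow_natCast]
        push_cast
        ring
    _ = (2 : ℝ) ^ ((C : ℝ) * (n : ℝ) ^ 2) := by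
        congr 1
        push_cast
        ring
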